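/- arXiv:1411.5958 — 2 statements merged into one kernel-verified Lean document; each statement's English description precedes it below -/
import Mathlib

section
/- Let q > 0 and let P be a q-stable finite multiset of vectors in a finite-dimensional vector space satisfying (number of nonzero vectors of P) ≤ dim(span P) + q. Then P is indecomposable, i.e., P admits no partition into two submultisets P₁, P₂ whose spans are both nonzero and whose spans are linearly independent (intersect trivially with sum equal to span P as a direct sum). -/
/-!
A `q`-stable multiset `Q` with nonzero span has at least `dim (span Q) + q` nonzero vectors:
otherwise deleting `q` of its nonzero vectors (or all of them) leaves fewer than `dim (span Q)`
nonzero vectors, which cannot span `span Q`. If `P = P₁ + P₂` with disjoint spans, deleting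
vectors from `P₁` cannot be compensated by `P₂`, so both parts are `q`-stable; counting nonzero
vectors then gives `nnz P ≥ dim (span P) + 2q`, contradicting the hypothesis as `q > 0`.
-/

open scoped Classical

/-- The linear span of (the set of elements of) a multiset of vectors. -/
def mSpan (F : Type*) {V : Type*} [Field F] [AddCommGroup V] [Module F V]
    (P : Multiset V) : Submodule F V :=
  Submodule.span F {x | x ∈ P}

/-- A finite multiset `P` of vectors is `q`-stable if its linear span is unchanged after
removing any at most `q` vectors (counted with multiplicity). -/
def QStable (F : Type*) {V : Type*} [Field F] [AddCommGroup V] [Module F V]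
    (q : ℕ) (P : Multiset V) : Prop :=
  ∀ S : Multiset V, S ≤ P → Multiset.card S ≤ q → mSpan F (P - S) = mSpan F P

/-- The number of nonzero vectors of a multiset, with multiplicity. -/
noncomputable def nnz {V : Type*} [Zero V] (P : Multiset V) : ℕ :=
  Multiset.card (Multiset.filter (fun v => v ≠ 0) P)

theorem Multiset.exists_le_card_eq {α : Type*} {s : Multiset α} {n : ℕ}
    (hn : n ≤ Multiset.card s) : ∃ t ≤ s, Multiset.card t = n := by
  obtain ⟨t, ht⟩ := Multiset.card_pos_iff_exists_mem.1
    ((Multiset.card_powersetCard n s).symm ▸ Nat.choose_pos hn)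
  exact ⟨t, Multiset.mem_powersetCard.1 ht⟩

section

variable {F V : Type*} [Field F] [AddCommGroup V] [Module F V]

instance mSpan.finiteDimensional (P : Multiset V) : FiniteDimensional F (mSpan F P) :=
  FiniteDimensional.span_of_finite F P.finite_toSet

theorem mSpan_mono {P Q : Multiset V} (h : P ≤ Q) : mSpan F P ≤ mSpan F Q :=
  Submodule.span_mono fun _ hx => Multiset.mem_of_le h hx

theorem mSpan_add (P Q : Multiset V) : mSpan F (P + Q) = mSpan F P ⊔ mSpan F Q := by
  simp only [mSpan, Multiset.mem_add, Set.ofPred_or, Submodule.span_union]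

theorem mSpan_filter_ne_zero (P : Multiset V) :
    mSpan F (P.filter (· ≠ 0)) = mSpan F P := by
  simp only [mSpan, Multiset.mem_filter]
  exact Submodule.span_sdiff_singleton_zero

theorem finrank_mSpan_le_card (P : Multiset V) :
    Module.finrank F (mSpan F P) ≤ Multiset.card P := by
  have h : mSpan F P = Submodule.span F (P.toFinset : Set V) :=
    congrArg (Submodule.span F) (Set.ext fun _ => Multiset.mem_toFinset.symm)
  rw [h]
  exact (finrank_span_finset_le_card P.toFinset).trans P.toFinset_card_le

theorem finrank_mSpan_le_nnz (P : Multiset V) : Module.finrank F (mSpan F P) ≤ nnz P := by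
  rw [← mSpan_filter_ne_zero]
  exact finrank_mSpan_le_card _

theorem nnz_add (P Q : Multiset V) : nnz (P + Q) = nnz P + nnz Q := by
  simp only [nnz, Multiset.filter_add, Multiset.card_add]

theorem nnz_sub {P S : Multiset V} (hS : S ≤ P.filter (· ≠ 0)) :
    nnz (P - S) = nnz P - Multiset.card S := by
  have hS₀ : S.filter (· ≠ 0) = S :=
    Multiset.filter_eq_self.2 fun _ hv => (Multiset.mem_filter.1 (Multiset.mem_of_le hS hv)).2
  rw [nnz, nnz, Multiset.filter_sub, hS₀, Multiset.card_sub hS]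

theorem finrank_mSpan_add_of_disjoint {P₁ P₂ : Multiset V}
    (h : Disjoint (mSpan F P₁) (mSpan F P₂)) :
    Module.finrank F (mSpan F (P₁ + P₂)) =
      Module.finrank F (mSpan F P₁) + Module.finrank F (mSpan F P₂) := by
  have := Submodule.finrank_sup_add_finrank_inf_eq (mSpan F P₁) (mSpan F P₂)
  rwa [h.eq_bot, finrank_bot, add_zero, ← mSpan_add] at this

theorem QStable.left_of_disjoint {q : ℕ} {P₁ P₂ : Multiset V} (hP : QStable F q (P₁ + P₂))
    (h : Disjoint (mSpan F P₁) (mSpan F P₂)) : QStable F q P₁ := by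
  intro S hS hcard
  have hsup := hP S (hS.trans le_self_add) hcard
  rw [← tsub_add_eq_add_tsub hS, mSpan_add, mSpan_add] at hsup
  refine eq_of_le_of_inf_le_of_sup_le (mSpan_mono tsub_le_self) ?_ hsup.ge
  simp only [h.eq_bot, bot_le]

theorem QStable.finrank_add_le_nnz {q : ℕ} {P : Multiset V} (hP : QStable F q P)
    (hP₀ : mSpan F P ≠ ⊥) : Module.finrank F (mSpan F P) + q ≤ nnz P := by
  by_contra! hlt
  have hd : 0 < Module.finrank F (mSpan F P) :=
    Nat.pos_of_ne_zero (mt Submodule.finrank_eq_zero.1 hP₀)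
  obtain ⟨S, hSP, hS⟩ : ∃ S ≤ P.filter (· ≠ 0), Multiset.card S = min q (nnz P) :=
    Multiset.exists_le_card_eq (min_le_right _ _)
  have hspan := hP S (hSP.trans (Multiset.filter_le _ _)) (hS ▸ min_le_left _ _)
  have hrank := finrank_mSpan_le_nnz (F := F) (P - S)
  rw [hspan, nnz_sub hSP, hS] at hrank
  omega

end

theorem stmt_2_general {F V : Type*} [Field F] [AddCommGroup V] [Module F V]
    (q : ℕ) (hq : 0 < q) (P : Multiset V) (hP : QStable F q P)
    (hcard : nnz P ≤ Module.finrank F (mSpan F P) + q) :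
    ¬ ∃ P₁ P₂ : Multiset V, P = P₁ + P₂ ∧ mSpan F P₁ ≠ ⊥ ∧ mSpan F P₂ ≠ ⊥ ∧
      Disjoint (mSpan F P₁) (mSpan F P₂) := by
  rintro ⟨P₁, P₂, rfl, h₁, h₂, hdisj⟩
  have hP₂ : QStable F q (P₂ + P₁) := add_comm P₁ P₂ ▸ hP
  have hnnz₁ := (hP.left_of_disjoint hdisj).finrank_add_le_nnz h₁
  have hnnz₂ := (hP₂.left_of_disjoint hdisj.symm).finrank_add_le_nnz h₂
  rw [nnz_add, finrank_mSpan_add_of_disjoint hdisj] at hcard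
  omega

/-- If `q > 0` and `P` is `q`-stable with at most `dim (span P) + q` nonzero vectors, then
`P` is indecomposable: it admits no partition into two submultisets with nonzero,
linearly independent (trivially intersecting) spans. -/
theorem stmt_2 {F V : Type*} [Field F] [AddCommGroup V] [Module F V] [FiniteDimensional F V]
    (q : ℕ) (hq : 0 < q) (P : Multiset V) (hP : QStable F q P)
    (hcard : nnz P ≤ Module.finrank F (mSpan F P) + q) :
    ¬ ∃ P₁ P₂ : Multiset V, P = P₁ + P₂ ∧ mSpan F P₁ ≠ ⊥ ∧ mSpan F P₂ ≠ ⊥ ∧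
      Disjoint (mSpan F P₁) (mSpan F P₂) :=
  stmt_2_general q hq P hP hcard
end

section
/- If a q-stable finite multiset P of vectors decomposes as a disjoint union of two submultisets P₁ and P₂ whose spans are linearly independent (the sum of the spans is direct), then both P₁ and P₂ are q-stable. -/
open scoped Classical

lemma mSpan_add_s3 (F : Type*) {V : Type*} [Field F] [AddCommGroup V] [Module F V]
    (A B : Multiset V) : mSpan F (A + B) = mSpan F A ⊔ mSpan F B := by
  simp only [mSpan, Multiset.mem_add, Set.ofPred_or, Submodule.span_union]

lemma mSpan_mono_s3 (F : Type*) {V : Type*} [Field F] [AddCommGroup V] [Module F V]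
    {A B : Multiset V} (h : A ≤ B) : mSpan F A ≤ mSpan F B :=
  Submodule.span_mono fun _ hx => Multiset.mem_of_le h hx

lemma QStable.of_add_left {F V : Type*} [Field F] [AddCommGroup V] [Module F V]
    {q : ℕ} {P₁ P₂ : Multiset V} (hP : QStable F q (P₁ + P₂))
    (hdisj : Disjoint (mSpan F P₁) (mSpan F P₂)) : QStable F q P₁ := by
  intro S hS hcard
  have hspan : mSpan F (P₁ - S) ⊔ mSpan F P₂ = mSpan F P₁ ⊔ mSpan F P₂ := by
    rw [← mSpan_add_s3, ← mSpan_add_s3, tsub_add_eq_add_tsub hS]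
    exact hP S (hS.trans (Multiset.le_add_right _ _)) hcard
  -- submodules form a modular lattice, and `mSpan F P₁ ⊓ mSpan F P₂ = ⊥`
  exact eq_of_le_of_inf_le_of_sup_le (mSpan_mono_s3 F (Multiset.sub_le_self _ _))
    (hdisj.eq_bot.trans_le bot_le) hspan.ge

lemma QStable.of_add_right {F V : Type*} [Field F] [AddCommGroup V] [Module F V]
    {q : ℕ} {P₁ P₂ : Multiset V} (hP : QStable F q (P₁ + P₂))
    (hdisj : Disjoint (mSpan F P₁) (mSpan F P₂)) : QStable F q P₂ :=
  (add_comm P₁ P₂ ▸ hP).of_add_left hdisj.symm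

/-- If a `q`-stable multiset `P` is a disjoint union of two submultisets whose spans are
linearly independent (the sum of the spans is direct), then both parts are `q`-stable. -/
theorem stmt_3 {F V : Type*} [Field F] [AddCommGroup V] [Module F V]
    (q : ℕ) (P P₁ P₂ : Multiset V) (hP : QStable F q P) (hsum : P = P₁ + P₂)
    (hdisj : Disjoint (mSpan F P₁) (mSpan F P₂)) :
    QStable F q P₁ ∧ QStable F q P₂ := by
  subst hsum
  exact ⟨hP.of_add_left hdisj, hP.of_add_right hdisj⟩
end
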